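/- Let (r_0, …, r_h) be a δ-sequence with conductor μ = (Σ_{k=1}^h (e_k − 1) r_k) − r_0 + 1. Assume μ ≥ 2 and (r_0,…,r_h) ≠ (3,2). Then 2 ≤ r_h ≤ μ − 2 and (d_h − 1)(r_h − 1) ≤ μ, so in particular d_h ≤ μ/(r_h − 1) + 1. -/

import Mathlib

/-- A sequence `r 0, …, r h` of positive integers, together with the chain of gcds
`d 1 = r 0`, `d (k+1) = gcd (d k) (r k)`, is *free* if `d (h+1) = 1` (so the `r k` are
coprime) and `e_k · r_k ∈ ⟨r_0, …, r_{k−1}⟩` for all `1 ≤ k ≤ h`, where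
`e k = d k / d (k+1)`. -/
def IsFreeSeq (h : ℕ) (r d : ℕ → ℕ) : Prop :=
  (∀ k ≤ h, 0 < r k) ∧
  d 1 = r 0 ∧
  (∀ k, 1 ≤ k → k ≤ h → d (k + 1) = Nat.gcd (d k) (r k)) ∧
  d (h + 1) = 1 ∧
  ∀ k, 1 ≤ k → k ≤ h →
    (d k / d (k + 1)) * r k ∈ AddSubmonoid.closure (r '' Set.Iio k)

/-- A free sequence `(r_0, …, r_h)` (with gcd chain `d`) is a *δ-sequence* if moreover
`r_k d_k > r_{k+1} d_{k+1}` for `1 ≤ k ≤ h−1` and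
`r_0 > r_1 > d_2 > d_3 > ⋯ > d_{h+1} = 1`. -/
def IsDeltaSeq (h : ℕ) (r d : ℕ → ℕ) : Prop :=
  IsFreeSeq h r d ∧ 1 ≤ h ∧
  (∀ k, 1 ≤ k → k + 1 ≤ h → r k * d k > r (k + 1) * d (k + 1)) ∧
  r 0 > r 1 ∧ r 1 > d 2 ∧
  ∀ k, 2 ≤ k → k ≤ h → d (k + 1) < d k

/-!
The key fact is `d (j+1) < r j` for `1 ≤ j ≤ h`, by strong induction on `j`. Since `d (j+1) ∣ r j`,
otherwise `r j = d (j+1)`, so `e_j r_j = d_j` lies in the monoid generated by `r_0, …, r_{j-1}`.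
A positive element of that monoid is at least one of its generators, say `r i ≤ d j` with `i < j`;
but `d j ∣ d (i+1)` and `d (i+1) < r i` by induction (`r 0 > r 1 > d 2` for `i = 0`). For `j = h`
this gives `r h > d (h+1) = 1`.

For the conductor, write `μ + r_0 = Σ (e_k - 1) r_k + 1`. If `h = 1` this is
`μ = (r_0-1)(r_1-1)` with `r_0, r_1` coprime; for `r_1 = 2` this forces `r_0` odd, so `r_0 ≥ 5`
once `(3,2)` is excluded. If `h ≥ 2`, the freeness condition at `k = 1` says that `e_1 r_1` is a
multiple of `r_0` other than `r_0` itself, so `(e_1 - 1) r_1 > r_0`, and the last summand is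
`(d_h - 1) r_h` with `d_h ≥ 2`.
-/

theorem AddSubmonoid.exists_le_of_mem_closure {M : Type*} [AddCommMonoid M] [PartialOrder M]
    [CanonicallyOrderedAdd M] {S : Set M} {x : M} (hx : x ∈ AddSubmonoid.closure S)
    (hx0 : x ≠ 0) : ∃ y ∈ S, y ≤ x := by
  induction hx using AddSubmonoid.closure_induction with
  | mem y hy => exact ⟨y, hy, le_rfl⟩
  | zero => exact absurd rfl hx0
  | add a b _ _ iha ihb =>
    by_cases ha : a = 0
    · subst ha
      obtain ⟨y, hy, hyb⟩ := ihb (by simpa using hx0)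
      exact ⟨y, hy, hyb.trans le_add_self⟩
    · obtain ⟨y, hy, hya⟩ := iha ha
      exact ⟨y, hy, hya.trans le_self_add⟩

theorem Nat.add_two_le_pred_mul_pred_of_coprime {a b : ℕ} (hab : Nat.Coprime a b) (hb : 2 ≤ b)
    (hba : b < a) (hne : ¬(a = 3 ∧ b = 2)) : b + 2 ≤ (a - 1) * (b - 1) := by
  rcases hb.eq_or_lt with rfl | hb3
  · have ha_odd : ¬ 2 ∣ a := fun h2 => by
      have := Nat.dvd_gcd h2 (dvd_refl 2)
      rw [hab] at this
      omega
    have : 5 ≤ a := by omega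
    simp only [Nat.add_one_sub_one, mul_one]
    omega
  · obtain ⟨a, rfl⟩ : ∃ a', a = a' + 1 := ⟨a - 1, by omega⟩
    obtain ⟨b, rfl⟩ : ∃ b', b = b' + 1 := ⟨b - 1, by omega⟩
    simp only [Nat.add_sub_cancel]
    nlinarith

theorem Nat.cast_le_div_sub_one_add_one {a b m : ℕ} (ha : 1 ≤ a) (hb : 2 ≤ b)
    (h : (a - 1) * (b - 1) ≤ m) : (a : ℝ) ≤ m / ((b : ℝ) - 1) + 1 := by
  have hb' : (0 : ℝ) < (b : ℝ) - 1 := by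
    have : (2 : ℝ) ≤ b := by exact_mod_cast hb
    linarith
  have hcast : ((a : ℝ) - 1) * ((b : ℝ) - 1) ≤ m := by
    have := (Nat.cast_le (α := ℝ)).mpr h
    rwa [Nat.cast_mul, Nat.cast_sub ha, Nat.cast_sub (by omega), Nat.cast_one] at this
  linarith [(le_div_iff₀ hb').mpr hcast]

namespace IsFreeSeq

variable {h : ℕ} {r d : ℕ → ℕ}

theorem r_pos (hr : IsFreeSeq h r d) {k : ℕ} (hk : k ≤ h) : 0 < r k := hr.1 k hk

theorem d_one (hr : IsFreeSeq h r d) : d 1 = r 0 := hr.2.1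

theorem d_succ (hr : IsFreeSeq h r d) {k : ℕ} (hk1 : 1 ≤ k) (hk : k ≤ h) :
    d (k + 1) = Nat.gcd (d k) (r k) :=
  hr.2.2.1 k hk1 hk

theorem d_last (hr : IsFreeSeq h r d) : d (h + 1) = 1 := hr.2.2.2.1

theorem div_mul_mem_closure (hr : IsFreeSeq h r d) {k : ℕ} (hk1 : 1 ≤ k) (hk : k ≤ h) :
    d k / d (k + 1) * r k ∈ AddSubmonoid.closure (r '' Set.Iio k) :=
  hr.2.2.2.2 k hk1 hk

theorem d_pos (hr : IsFreeSeq h r d) {k : ℕ} (hk1 : 1 ≤ k) (hk : k ≤ h + 1) : 0 < d k := by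
  induction k, hk1 using Nat.le_induction with
  | base => exact hr.d_one ▸ hr.r_pos (Nat.zero_le h)
  | succ k hk1 _ =>
    rw [hr.d_succ hk1 (by omega)]
    exact Nat.gcd_pos_of_pos_right _ (hr.r_pos (by omega))

theorem d_succ_dvd_d (hr : IsFreeSeq h r d) {k : ℕ} (hk1 : 1 ≤ k) (hk : k ≤ h) :
    d (k + 1) ∣ d k :=
  hr.d_succ hk1 hk ▸ Nat.gcd_dvd_left _ _

theorem d_succ_dvd_r (hr : IsFreeSeq h r d) {k : ℕ} (hk1 : 1 ≤ k) (hk : k ≤ h) :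
    d (k + 1) ∣ r k :=
  hr.d_succ hk1 hk ▸ Nat.gcd_dvd_right _ _

theorem d_dvd_d_of_le (hr : IsFreeSeq h r d) {j k : ℕ} (hj : 1 ≤ j) (hjk : j ≤ k)
    (hk : k ≤ h + 1) : d k ∣ d j := by
  induction k, hjk using Nat.le_induction with
  | base => exact dvd_rfl
  | succ k hjk ih => exact (hr.d_succ_dvd_d (by omega) (by omega)).trans (ih (by omega))

theorem d_dvd_r_of_lt (hr : IsFreeSeq h r d) {j k : ℕ} (hjk : j < k) (hk : k ≤ h + 1) :
    d k ∣ r j := by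
  rcases j.eq_zero_or_pos with rfl | hj
  · exact hr.d_one ▸ hr.d_dvd_d_of_le le_rfl hjk hk
  · exact (hr.d_dvd_d_of_le (by omega) hjk hk).trans (hr.d_succ_dvd_r hj (by omega))

theorem one_le_div_d_succ (hr : IsFreeSeq h r d) {k : ℕ} (hk1 : 1 ≤ k) (hk : k ≤ h) :
    1 ≤ d k / d (k + 1) :=
  (Nat.one_le_div_iff (hr.d_pos (by omega) (by omega))).mpr
    (Nat.le_of_dvd (hr.d_pos hk1 (by omega)) (hr.d_succ_dvd_d hk1 hk))

theorem d_succ_lt_r (hr : IsFreeSeq h r d) (h01 : r 1 < r 0) (h12 : d 2 < r 1) :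
    ∀ j, 1 ≤ j → j ≤ h → d (j + 1) < r j := by
  intro j
  induction j using Nat.strong_induction_on with
  | _ j ih =>
  intro hj1 hjh
  rcases hj1.eq_or_lt with rfl | hj2
  · exact h12
  by_contra hle
  have hrj : r j = d (j + 1) :=
    le_antisymm (not_lt.mp hle) (Nat.le_of_dvd (hr.r_pos hjh) (hr.d_succ_dvd_r hj1 hjh))
  have hmem : d j ∈ AddSubmonoid.closure (r '' Set.Iio j) := by
    have := hr.div_mul_mem_closure hj1 hjh
    rwa [hrj, Nat.div_mul_cancel (hr.d_succ_dvd_d hj1 hjh)] at this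
  obtain ⟨_, ⟨i, hij : i < j, rfl⟩, hri⟩ :=
    AddSubmonoid.exists_le_of_mem_closure hmem (hr.d_pos hj1 (by omega)).ne'
  rcases i.eq_zero_or_pos with rfl | hi
  · have : d j ≤ d 2 := Nat.le_of_dvd (hr.d_pos (by norm_num) (by omega))
      (hr.d_dvd_d_of_le (by norm_num) (by omega) (by omega))
    omega
  · have : d j ≤ d (i + 1) := Nat.le_of_dvd (hr.d_pos (by omega) (by omega))
      (hr.d_dvd_d_of_le (by omega) hij (by omega))
    have := ih i hij hi (by omega)
    omega

theorem two_mul_r_zero_le (hr : IsFreeSeq h r d) (h1 : 1 ≤ h) (h12 : d 2 < r 1) :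
    2 * r 0 ≤ d 1 / d 2 * r 1 := by
  have hmem := hr.div_mul_mem_closure le_rfl h1
  rw [Order.Iio_one, Set.image_singleton] at hmem
  obtain ⟨n, hn⟩ := AddSubmonoid.mem_closure_singleton.mp hmem
  rw [smul_eq_mul] at hn
  have he : 0 < d 1 / d 2 := hr.one_le_div_d_succ le_rfl h1
  have hd1 : d 1 / d 2 * d 2 = r 0 := hr.d_one ▸ Nat.div_mul_cancel (hr.d_succ_dvd_d le_rfl h1)
  have hn2 : 2 ≤ n := by
    by_contra! hn2
    interval_cases n
    · simp only [zero_mul] at hn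
      exact (Nat.mul_pos he (hr.r_pos h1)).ne hn
    · have : r 1 = d 2 := Nat.eq_of_mul_eq_mul_left he (by rw [← hn, hd1, one_mul])
      omega
  calc 2 * r 0 ≤ n * r 0 := Nat.mul_le_mul_right _ hn2
    _ = d 1 / d 2 * r 1 := hn

theorem natCast_conductor_sum (hr : IsFreeSeq h r d) :
    ∑ k ∈ Finset.Icc 1 h, (((d k / d (k + 1) : ℕ) : ℤ) - 1) * (r k : ℤ)
      = ((∑ k ∈ Finset.Icc 1 h, (d k / d (k + 1) - 1) * r k : ℕ) : ℤ) := by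
  rw [Nat.cast_sum]
  refine Finset.sum_congr rfl fun k hk => ?_
  rw [Finset.mem_Icc] at hk
  push_cast [Nat.cast_sub (hr.one_le_div_d_succ hk.1 hk.2)]
  rfl

theorem coprime_of_length_one (hr : IsFreeSeq 1 r d) : Nat.Coprime (r 0) (r 1) := by
  have := hr.d_succ le_rfl le_rfl
  rw [hr.d_last, hr.d_one] at this
  exact this.symm

theorem conductor_eq_of_length_one (hr : IsFreeSeq 1 r d) {μ : ℕ}
    (hμ : μ + r 0 = ∑ k ∈ Finset.Icc 1 1, (d k / d (k + 1) - 1) * r k + 1) :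
    μ = (r 0 - 1) * (r 1 - 1) := by
  rw [Finset.Icc_self, Finset.sum_singleton, hr.d_last, Nat.div_one, hr.d_one] at hμ
  have := hr.r_pos (Nat.zero_le 1)
  have := hr.r_pos le_rfl
  obtain ⟨a, ha⟩ : ∃ a, r 0 = a + 1 := ⟨r 0 - 1, by omega⟩
  obtain ⟨b, hb⟩ : ∃ b, r 1 = b + 1 := ⟨r 1 - 1, by omega⟩
  rw [ha, hb] at hμ ⊢
  simp only [Nat.add_sub_cancel] at hμ ⊢
  nlinarith

theorem pred_d_mul_r_add_two_le (hr : IsFreeSeq h r d) (h2 : 2 ≤ h) (h01 : r 1 < r 0)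
    (h12 : d 2 < r 1) {μ : ℕ}
    (hμ : μ + r 0 = ∑ k ∈ Finset.Icc 1 h, (d k / d (k + 1) - 1) * r k + 1) :
    (d h - 1) * r h + 2 ≤ μ := by
  have hsub : ({1, h} : Finset ℕ) ⊆ Finset.Icc 1 h := by
    intro x hx
    simp only [Finset.mem_insert, Finset.mem_singleton] at hx
    rw [Finset.mem_Icc]
    omega
  have hsum := Finset.sum_le_sum_of_subset (f := fun k => (d k / d (k + 1) - 1) * r k) hsub
  rw [Finset.sum_insert (by simp only [Finset.mem_singleton]; omega), Finset.sum_singleton,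
    hr.d_last, Nat.div_one] at hsum
  have he1 := hr.two_mul_r_zero_le (by omega) h12
  have hsplit : (d 1 / d 2 - 1) * r 1 = d 1 / d 2 * r 1 - r 1 := Nat.sub_one_mul _ _
  change (d 1 / d 2 - 1) * r 1 + _ ≤ _ at hsum
  omega

end IsFreeSeq

theorem delta_sequence_last_generator_bounds_general (h : ℕ) (r d : ℕ → ℕ)
    (hdelta : IsDeltaSeq h r d) (μ : ℕ)
    (hμ : (μ : ℤ)
      = (∑ k ∈ Finset.Icc 1 h, (((d k / d (k + 1) : ℕ) : ℤ) - 1) * (r k : ℤ))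
        - (r 0 : ℤ) + 1)
    (hne : ¬ (h = 1 ∧ r 0 = 3 ∧ r 1 = 2)) :
    2 ≤ r h ∧ r h ≤ μ - 2 ∧ (d h - 1) * (r h - 1) ≤ μ ∧
      (d h : ℝ) ≤ (μ : ℝ) / ((r h : ℝ) - 1) + 1 := by
  obtain ⟨hr, h1, -, h01, h12, hdec⟩ := hdelta
  rw [hr.natCast_conductor_sum] at hμ
  replace hμ : μ + r 0 = ∑ k ∈ Finset.Icc 1 h, (d k / d (k + 1) - 1) * r k + 1 := by omega
  have hrh : 2 ≤ r h := by
    have := hr.d_succ_lt_r h01 h12 h h1 le_rfl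
    rw [hr.d_last] at this
    omega
  have hbounds : r h + 2 ≤ μ ∧ (d h - 1) * (r h - 1) ≤ μ := by
    rcases h1.eq_or_lt with rfl | h2
    · have hμ1 := hr.conductor_eq_of_length_one hμ
      refine ⟨hμ1 ▸ Nat.add_two_le_pred_mul_pred_of_coprime hr.coprime_of_length_one hrh h01
        fun h32 => hne ⟨rfl, h32⟩, ?_⟩
      rw [hμ1, hr.d_one]
    · have hμh := hr.pred_d_mul_r_add_two_le h2 h01 h12 hμ
      have hdh : 2 ≤ d h := by have := hdec h h2 le_rfl; rw [hr.d_last] at this; omega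
      have : r h ≤ (d h - 1) * r h := Nat.le_mul_of_pos_left _ (by omega)
      have : (d h - 1) * (r h - 1) ≤ (d h - 1) * r h := Nat.mul_le_mul_left _ (Nat.sub_le _ _)
      omega
  exact ⟨hrh, by omega, hbounds.2,
    Nat.cast_le_div_sub_one_add_one (hr.d_pos h1 (by omega)) hrh hbounds.2⟩

/-- Bounds on the last generator and on `d_h` for a δ-sequence with conductor
`μ = (Σ_{k=1}^h (e_k − 1) r_k) − r_0 + 1 ≥ 2`, other than `(3,2)`:
`2 ≤ r_h ≤ μ − 2` and `(d_h − 1)(r_h − 1) ≤ μ`, so `d_h ≤ μ/(r_h − 1) + 1`. -/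
theorem delta_sequence_last_generator_bounds (h : ℕ) (r d : ℕ → ℕ)
    (hdelta : IsDeltaSeq h r d) (μ : ℕ)
    (hμ : (μ : ℤ)
      = (∑ k ∈ Finset.Icc 1 h, (((d k / d (k + 1) : ℕ) : ℤ) - 1) * (r k : ℤ))
        - (r 0 : ℤ) + 1)
    (hμ2 : 2 ≤ μ) (hne : ¬ (h = 1 ∧ r 0 = 3 ∧ r 1 = 2)) :
    2 ≤ r h ∧ r h ≤ μ - 2 ∧ (d h - 1) * (r h - 1) ≤ μ ∧
      (d h : ℝ) ≤ (μ : ℝ) / ((r h : ℝ) - 1) + 1 :=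
  delta_sequence_last_generator_bounds_general h r d hdelta μ hμ hne
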